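/- In the 4-node example with arcs (1,2),(2,3),(3,1),(4,3),(1,4) each of capacity 1, the circulation x* with flow 1/2 on arcs (1,2),(2,3),(4,3),(1,4) and flow 1 on (3,1) is a maximum circulation, and the residual graph {(i,j) : x*_ij < q_ij} = {(1,2),(2,3),(4,3),(1,4)} is acyclic and strictly larger than the residual graph of either integral maximum circulation. -/

import Mathlib

open Finset

/-- `x` is a circulation on the arc set `A` with capacities `q`. -/
def IsCirculation {V : Type*} [Fintype V] [DecidableEq V]
    (A : Finset (V × V)) (q x : V × V → ℝ) : Prop :=
  (∀ a ∈ A, 0 ≤ x a ∧ x a ≤ q a) ∧ (∀ a, a ∉ A → x a = 0) ∧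
  ∀ i : V, ∑ a ∈ A.filter (fun a => a.1 = i), x a
         = ∑ a ∈ A.filter (fun a => a.2 = i), x a

/-- `x` is a maximum circulation: it maximizes total flow. -/
def IsMaxCirculation {V : Type*} [Fintype V] [DecidableEq V]
    (A : Finset (V × V)) (q x : V × V → ℝ) : Prop :=
  IsCirculation A q x ∧
  ∀ y, IsCirculation A q y → ∑ a ∈ A, y a ≤ ∑ a ∈ A, x a

/-- The residual (remaining-votes) relation: arcs of `A` not saturated by `x`. -/
def residRel {V : Type*} [Fintype V] [DecidableEq V]
    (A : Finset (V × V)) (q x : V × V → ℝ) (i j : V) : Prop :=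
  (i, j) ∈ A ∧ x (i, j) < q (i, j)

/-- A relation is acyclic if it has no directed cycle. -/
def Acyclic {V : Type*} (r : V → V → Prop) : Prop :=
  ∀ i, ¬ Relation.TransGen r i i

/-- The set of arcs of `A` left unsaturated by `x`. -/
noncomputable def unsat {V : Type*} [Fintype V] [DecidableEq V]
    (A : Finset (V × V)) (q x : V × V → ℝ) : Finset (V × V) :=
  A.filter (fun a => x a < q a)

/-- An arc is strong if some maximum circulation leaves it unsaturated. -/
def IsStrongArc {V : Type*} [Fintype V] [DecidableEq V]
    (A : Finset (V × V)) (q : V × V → ℝ) (a : V × V) : Prop :=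
  a ∈ A ∧ ∃ x, IsMaxCirculation A q x ∧ x a < q a

/-- A strong maximum circulation: a maximum circulation leaving as many arcs
unsaturated as possible. -/
def IsStrongMaxCirculation {V : Type*} [Fintype V] [DecidableEq V]
    (A : Finset (V × V)) (q x : V × V → ℝ) : Prop :=
  IsMaxCirculation A q x ∧
  ∀ y, IsMaxCirculation A q y → (unsat A q y).card ≤ (unsat A q x).card

/-- Strong complementary slackness between a circulation `x` and node
potentials `y`. -/
def StrongCS {V : Type*} [Fintype V] [DecidableEq V]
    (A : Finset (V × V)) (q x : V × V → ℝ) (y : V → ℝ) : Prop :=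
  ∀ a ∈ A,
    (x a = 0 → 1 - y a.1 + y a.2 ≤ 0) ∧
    (0 < x a → x a < q a → 1 - y a.1 + y a.2 = 0) ∧
    (x a = q a → 0 < 1 - y a.1 + y a.2)

/-- The vote graph is Eulerian: capacity balance holds at every node. -/
def Eulerian {V : Type*} [Fintype V] [DecidableEq V]
    (A : Finset (V × V)) (q : V × V → ℝ) : Prop :=
  ∀ i : V, ∑ a ∈ A.filter (fun a => a.1 = i), q a
         = ∑ a ∈ A.filter (fun a => a.2 = i), q a

/-- The arc set of the 4-node example (nodes 0,1,2,3 stand for 1,2,3,4). -/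
def A16 : Finset (Fin 4 × Fin 4) := {(0,1), (1,2), (2,0), (3,2), (0,3)}

/-- Unit capacities on the arcs of `A16`. -/
noncomputable def q16 : Fin 4 × Fin 4 → ℝ := fun a => if a ∈ A16 then 1 else 0

/-- The fractional circulation `x*`: flow 1/2 on (1,2),(2,3),(4,3),(1,4) and
flow 1 on (3,1). -/
noncomputable def xstar16 : Fin 4 × Fin 4 → ℝ := fun a =>
  if a = (2,0) then 1
  else if a ∈ ({(0,1), (1,2), (3,2), (0,3)} : Finset (Fin 4 × Fin 4)) then 1/2
  else 0

/-- The integral maximum circulation on cycle 1-2-3-1. -/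
noncomputable def xA16 : Fin 4 × Fin 4 → ℝ := fun a =>
  if a ∈ ({(0,1), (1,2), (2,0)} : Finset (Fin 4 × Fin 4)) then 1 else 0

/-- The integral maximum circulation on cycle 1-4-3-1. -/
noncomputable def xB16 : Fin 4 × Fin 4 → ℝ := fun a =>
  if a ∈ ({(0,3), (3,2), (2,0)} : Finset (Fin 4 × Fin 4)) then 1 else 0

/-! `x*` is the average of the two unit cycle flows. Every circulation has total flow
`3 x₃₁ ≤ 3`, which both cycle flows attain, and maximum circulations form a convex set, so `x*` is
maximum too. A strict convex combination of feasible flows leaves unsaturated every arc that one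
of them leaves unsaturated, so the residual graph of `x*` is the union of those of the two cycle
flows. It is acyclic because the potential `(0, 1, 2, 1)` increases along each of its arcs. -/

section General

variable {V : Type*} [Fintype V] [DecidableEq V] {A : Finset (V × V)} {q : V × V → ℝ}

theorem convex_setOf_isCirculation : Convex ℝ {x | IsCirculation A q x} := by
  rintro x ⟨hxcap, hxout, hxcons⟩ y ⟨hycap, hyout, hycons⟩ s t hs ht hst
  refine ⟨fun a ha => ?_, fun a ha => ?_, fun i => ?_⟩
  · obtain ⟨hx0, hxq⟩ := hxcap a ha
    obtain ⟨hy0, hyq⟩ := hycap a ha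
    simp only [Pi.add_apply, Pi.smul_apply, smul_eq_mul]
    constructor
    · positivity
    · nlinarith
  · simp [hxout a ha, hyout a ha]
  · simp only [Pi.add_apply, Pi.smul_apply, smul_eq_mul, sum_add_distrib, ← mul_sum,
      hxcons i, hycons i]

theorem convex_setOf_isMaxCirculation : Convex ℝ {x | IsMaxCirculation A q x} := by
  rintro x ⟨hx, hxmax⟩ y ⟨hy, hymax⟩ s t hs ht hst
  refine ⟨convex_setOf_isCirculation hx hy hs ht hst, fun z hz => ?_⟩
  have hsum : ∑ a ∈ A, (s • x + t • y) a = s * ∑ a ∈ A, x a + t * ∑ a ∈ A, y a := by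
    simp only [Pi.add_apply, Pi.smul_apply, smul_eq_mul, sum_add_distrib, ← mul_sum]
  calc ∑ a ∈ A, z a = s * ∑ a ∈ A, z a + t * ∑ a ∈ A, z a := by rw [← add_mul, hst, one_mul]
    _ ≤ s * ∑ a ∈ A, x a + t * ∑ a ∈ A, y a :=
      add_le_add (mul_le_mul_of_nonneg_left (hxmax z hz) hs)
        (mul_le_mul_of_nonneg_left (hymax z hz) ht)
    _ = ∑ a ∈ A, (s • x + t • y) a := hsum.symm

theorem mem_unsat_iff_residRel {x : V × V → ℝ} {i j : V} :
    (i, j) ∈ unsat A q x ↔ residRel A q x i j :=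
  mem_filter

theorem unsat_smul_add_smul {x y : V × V → ℝ} (hx : ∀ a ∈ A, x a ≤ q a)
    (hy : ∀ a ∈ A, y a ≤ q a) {s t : ℝ} (hs : 0 < s) (ht : 0 < t) (hst : s + t = 1) :
    unsat A q (s • x + t • y) = unsat A q x ∪ unsat A q y := by
  ext a
  simp only [unsat, mem_union, mem_filter, Pi.add_apply, Pi.smul_apply, smul_eq_mul,
    ← and_or_left, and_congr_right_iff]
  intro ha
  have hxq := hx a ha
  have hyq := hy a ha
  have hq : q a = s * q a + t * q a := by rw [← add_mul, hst, one_mul]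
  constructor
  · contrapose!
    rintro ⟨hxa, hya⟩
    nlinarith [mul_le_mul_of_nonneg_left hxa hs.le, mul_le_mul_of_nonneg_left hya ht.le]
  · rintro (hlt | hlt)
    · nlinarith [mul_lt_mul_of_pos_left hlt hs, mul_le_mul_of_nonneg_left hyq ht.le]
    · nlinarith [mul_le_mul_of_nonneg_left hxq hs.le, mul_lt_mul_of_pos_left hlt ht]

theorem isCirculation_indicator {C : Finset (V × V)} (hCA : C ⊆ A)
    (hq : ∀ a ∈ A, (if a ∈ C then 1 else 0) ≤ q a)
    (hbal : ∀ i, #(C.filter (·.1 = i)) = #(C.filter (·.2 = i))) :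
    IsCirculation A q (fun a => if a ∈ C then 1 else 0) := by
  have hrestrict : ∀ p : V × V → Prop, [DecidablePred p] →
      (∑ a ∈ A.filter p, if a ∈ C then (1 : ℝ) else 0) = #(C.filter p) := by
    intro p _
    rw [sum_boole, filter_filter]
    congr 2
    ext a
    simp only [mem_filter]
    exact ⟨fun h => ⟨h.2.2, h.2.1⟩, fun h => ⟨hCA h.1, h.2, h.1⟩⟩
  exact ⟨fun a ha => ⟨ite_nonneg zero_le_one le_rfl, hq a ha⟩,
    fun a ha => if_neg fun h => ha (hCA h), fun i => by rw [hrestrict, hrestrict, hbal]⟩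

theorem unsat_indicator {C : Finset (V × V)} (hq : ∀ a ∈ A, q a = 1) :
    unsat A q (fun a => if a ∈ C then 1 else 0) = A \ C := by
  ext a
  by_cases ha : a ∈ A
  · by_cases hC : a ∈ C <;> simp [unsat, ha, hC, hq a ha]
  · simp [unsat, ha]

end General

theorem Acyclic.of_lt_comp {V α : Type*} [Preorder α] {r : V → V → Prop} (f : V → α)
    (hf : ∀ i j, r i j → f i < f j) : Acyclic r := fun i hi =>
  lt_irrefl (f i) <| by
    simpa only [Relation.transGen_eq_self] using hi.lift (p := (· < ·)) f hf

theorem q16_of_mem {a : Fin 4 × Fin 4} (ha : a ∈ A16) : q16 a = 1 := if_pos ha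

/-- Conservation at nodes 2, 3 and 4 reads `x₁₂ = x₂₃`, `x₃₁ = x₂₃ + x₄₃` and `x₁₄ = x₄₃`. -/
theorem sum_eq_three_mul_of_isCirculation {y : Fin 4 × Fin 4 → ℝ}
    (hy : IsCirculation A16 q16 y) : ∑ a ∈ A16, y a = 3 * y (2, 0) := by
  have h1 := hy.2.2 1
  have h2 := hy.2.2 2
  have h3 := hy.2.2 3
  simp only [A16, filter_insert, filter_singleton, Fin.isValue, Fin.reduceEq, zero_ne_one,
    one_ne_zero, ↓reduceIte, insert_empty_eq, sum_singleton, sum_insert, mem_insert, mem_singleton,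
    Prod.mk.injEq, and_true, and_false, and_self, or_self, not_false_eq_true] at h1 h2 h3 ⊢
  linarith

theorem sum_le_three_of_isCirculation {y : Fin 4 × Fin 4 → ℝ}
    (hy : IsCirculation A16 q16 y) : ∑ a ∈ A16, y a ≤ 3 := by
  have hcap := (hy.1 (2, 0) (by decide)).2
  rw [q16_of_mem (by decide)] at hcap
  rw [sum_eq_three_mul_of_isCirculation hy]
  linarith

theorem isMaxCirculation_indicator_A16 {C : Finset (Fin 4 × Fin 4)} (hCA : C ⊆ A16)
    (hbal : ∀ i, #(C.filter (·.1 = i)) = #(C.filter (·.2 = i))) (hcard : #C = 3) :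
    IsMaxCirculation A16 q16 (fun a => if a ∈ C then 1 else 0) := by
  refine ⟨isCirculation_indicator hCA (fun a ha => ?_) hbal, fun y hy => ?_⟩
  · rw [q16_of_mem ha]
    split_ifs <;> norm_num
  · rw [sum_boole, filter_mem_eq_inter, inter_eq_right.mpr hCA, hcard]
    exact_mod_cast sum_le_three_of_isCirculation hy

theorem xstar16_eq_average : xstar16 = (1 / 2 : ℝ) • xA16 + (1 / 2 : ℝ) • xB16 := by
  ext ⟨i, j⟩
  fin_cases i <;> fin_cases j <;> norm_num [xstar16, xA16, xB16, Fin.ext_iff]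

/-- `x*` is a maximum circulation whose residual graph is
`{(1,2),(2,3),(4,3),(1,4)}`, is acyclic, and is strictly larger than the
residual graph of either integral maximum circulation. -/
theorem four_node_example :
    IsMaxCirculation A16 q16 xstar16 ∧
    unsat A16 q16 xstar16 = ({(0,1), (1,2), (3,2), (0,3)} : Finset (Fin 4 × Fin 4)) ∧
    Acyclic (residRel A16 q16 xstar16) ∧
    IsMaxCirculation A16 q16 xA16 ∧ IsMaxCirculation A16 q16 xB16 ∧
    (unsat A16 q16 xA16).card < (unsat A16 q16 xstar16).card ∧
    (unsat A16 q16 xB16).card < (unsat A16 q16 xstar16).card := by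
  have hA : IsMaxCirculation A16 q16 xA16 :=
    isMaxCirculation_indicator_A16 (by decide) (by decide) (by decide)
  have hB : IsMaxCirculation A16 q16 xB16 :=
    isMaxCirculation_indicator_A16 (by decide) (by decide) (by decide)
  have hstar : IsMaxCirculation A16 q16 xstar16 := by
    rw [xstar16_eq_average]
    exact convex_setOf_isMaxCirculation hA hB (by norm_num) (by norm_num) (by norm_num)
  have hunsatA : unsat A16 q16 xA16 = A16 \ {(0,1), (1,2), (2,0)} :=
    unsat_indicator fun _ => q16_of_mem
  have hunsatB : unsat A16 q16 xB16 = A16 \ {(0,3), (3,2), (2,0)} :=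
    unsat_indicator fun _ => q16_of_mem
  have hunsat : unsat A16 q16 xstar16 = {(0,1), (1,2), (3,2), (0,3)} := by
    rw [xstar16_eq_average, unsat_smul_add_smul (fun a ha => (hA.1.1 a ha).2)
      (fun a ha => (hB.1.1 a ha).2) (by norm_num) (by norm_num) (by norm_num), hunsatA, hunsatB]
    decide
  refine ⟨hstar, hunsat, ?_, hA, hB, ?_, ?_⟩
  · refine Acyclic.of_lt_comp ![(0 : ℕ), 1, 2, 1] fun i j hij => ?_
    rw [← mem_unsat_iff_residRel, hunsat] at hij
    revert i j
    decide
  · rw [hunsatA, hunsat]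
    decide
  · rw [hunsatB, hunsat]
    decide
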